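/- If K is a nonempty weak*-compact set of f-invariant probability measures that is empirically stochastically stable, then every measure μ ∈ K is pseudo-physical. -/

import Mathlib

/-!
Fix `μ₀ ∈ K` and `ρ₀ > 0`, and suppose the weak basin `W = A^{ρ₀}_{μ₀}` is `m`-null. For fixed `n`,
`σ_{ε,n,x} → σ_{n,x}` as `ε → 0⁺`, so `Â_K` is exactly the set of points whose zero-noise
empiric probabilities approach `K`. For such a point outside `W`, every cluster point of
`(σ_{n,x})` lies in `K` and is `ρ₀`-far from `μ₀`, so these probabilities approach the compact set
`K' = K ∩ {ν : dist*(ν, μ₀) ≥ ρ₀}`, nonempty since `Â ⊆ Â_K` is not inside the null set `W`. Hence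
`Â_K \ Â_{K'} ⊆ W` is null, minimality gives `K ⊆ K'`, and `μ₀ ∈ K'` is absurd.
-/

open MeasureTheory Metric Set Filter Topology
open scoped ENNReal NNReal

namespace EmpStoch

variable {M : Type*} [MetricSpace M] [MeasurableSpace M] [BorelSpace M]

/-- The Dirac probability measure `δ_x` at a point `x`. -/
noncomputable def diracProb (x : M) : ProbabilityMeasure M :=
  ⟨MeasureTheory.Measure.dirac x, inferInstance⟩

/-- `dstar` is a metric on the space `𝓜` of Borel probability measures which is
compatible with (i.e. metrizes) the weak* topology. -/
def MetrizesWeakStar (dstar : ProbabilityMeasure M → ProbabilityMeasure M → ℝ) : Prop :=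
  (∀ μ ν, dstar μ ν = 0 ↔ μ = ν) ∧
  (∀ μ ν, dstar μ ν = dstar ν μ) ∧
  (∀ μ ν ξ, dstar μ ξ ≤ dstar μ ν + dstar ν ξ) ∧
  (∀ (μ : ProbabilityMeasure M) (s : Set (ProbabilityMeasure M)),
      s ∈ nhds μ ↔ ∃ ρ > (0 : ℝ), {ν | dstar ν μ < ρ} ⊆ s)

/-- `P ε x` is the transition probability `p_ε(x,·)`, i.e. for every `ε > 0`, every `x`
and every Borel set `A`, `p_ε(x,A) = m(A ∩ B_ε(f x)) / m(B_ε(f x))`. -/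
def IsTransitionKernel (f : M → M) (m : Measure M)
    (P : ℝ → M → ProbabilityMeasure M) : Prop :=
  ∀ ε > (0 : ℝ), ∀ (x : M) (A : Set M), MeasurableSet A →
    (P ε x : Measure M) A = m (A ∩ Metric.ball (f x) ε) / m (Metric.ball (f x) ε)

/-- `Lop ε` is the dual transfer operator `L*_ε : 𝓜 → 𝓜`, characterized by
`∫ φ d(L*_ε μ) = ∫ (∫ φ(y) p_ε(x,dy)) dμ(x)` for every continuous `φ`. -/
def IsDualTransfer (P : ℝ → M → ProbabilityMeasure M)
    (Lop : ℝ → ProbabilityMeasure M → ProbabilityMeasure M) : Prop :=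
  ∀ ε > (0 : ℝ), ∀ (μ : ProbabilityMeasure M) (φ : C(M, ℝ)),
    ∫ y, φ y ∂(Lop ε μ : Measure M) = ∫ x, (∫ y, φ y ∂(P ε x : Measure M)) ∂(μ : Measure M)

/-- `S ε n x` is the empiric stochastic probability
`σ_{ε,n,x} = (1/n) ∑_{j=1}^n (L*_ε)^j δ_x`. -/
def IsEmpiricStochastic (Lop : ℝ → ProbabilityMeasure M → ProbabilityMeasure M)
    (S : ℝ → ℕ → M → ProbabilityMeasure M) : Prop :=
  ∀ ε > (0 : ℝ), ∀ n : ℕ, 1 ≤ n → ∀ x : M,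
    (S ε n x : Measure M) =
      (n : ℝ≥0∞)⁻¹ • ∑ j ∈ Finset.range n, ((Lop ε)^[j + 1] (diracProb x) : Measure M)

/-- `S0 n x` is the zero-noise empiric probability `σ_{n,x} = (1/n) ∑_{j=1}^n δ_{f^j x}`. -/
def IsEmpiricZeroNoise (f : M → M) (S0 : ℕ → M → ProbabilityMeasure M) : Prop :=
  ∀ n : ℕ, 1 ≤ n → ∀ x : M,
    (S0 n x : Measure M) =
      (n : ℝ≥0∞)⁻¹ • ∑ j ∈ Finset.range n, MeasureTheory.Measure.dirac (f^[j + 1] x)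

/-- `pω_x`: the set of all weak* limits of convergent subsequences of `(σ_{n,x})_{n ≥ 1}`. -/
def pOmega (S0 : ℕ → M → ProbabilityMeasure M) (x : M) : Set (ProbabilityMeasure M) :=
  {ν | ∃ φ : ℕ → ℕ, StrictMono φ ∧ (∀ i, 1 ≤ φ i) ∧
    Tendsto (fun i => S0 (φ i) x) atTop (nhds ν)}

/-- The strong basin of statistical attraction `A_μ = {x : pω_x = {μ}}`. -/
def strongBasin (S0 : ℕ → M → ProbabilityMeasure M) (μ : ProbabilityMeasure M) : Set M :=
  {x | pOmega S0 x = {μ}}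

/-- The `ρ`-weak basin of statistical attraction
`A^ρ_μ = {x : dist*(pω_x, μ) < ρ}`. -/
def weakBasin (dstar : ProbabilityMeasure M → ProbabilityMeasure M → ℝ)
    (S0 : ℕ → M → ProbabilityMeasure M) (ρ : ℝ) (μ : ProbabilityMeasure M) : Set M :=
  {x | ∃ ν ∈ pOmega S0 x, dstar ν μ < ρ}

/-- The basin of empiric stochastic stability `Â_μ` of a measure `μ`. -/
def empBasin (dstar : ProbabilityMeasure M → ProbabilityMeasure M → ℝ)
    (S : ℝ → ℕ → M → ProbabilityMeasure M) (μ : ProbabilityMeasure M) : Set M :=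
  {x | ∀ ρ > (0 : ℝ), ∃ N : ℕ, ∀ n ≥ N, ∃ ε₀ > (0 : ℝ), ∀ ε : ℝ, 0 < ε → ε ≤ ε₀ →
    dstar (S ε n x) μ < ρ}

/-- `μ` is `f`-invariant: `f_* μ = μ`. -/
def IsInvariant (f : M → M) (μ : ProbabilityMeasure M) : Prop :=
  (μ : Measure M).map f = (μ : Measure M)

/-- An `f`-invariant measure `μ` is physical if its strong basin of statistical
attraction has positive `m`-measure. -/
def Physical (f : M → M) (m : Measure M) (S0 : ℕ → M → ProbabilityMeasure M)
    (μ : ProbabilityMeasure M) : Prop :=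
  IsInvariant f μ ∧ 0 < m (strongBasin S0 μ)

/-- An `f`-invariant measure `μ` is pseudo-physical if all its `ρ`-weak basins of
statistical attraction have positive `m`-measure. -/
def PseudoPhysical (f : M → M) (m : Measure M)
    (dstar : ProbabilityMeasure M → ProbabilityMeasure M → ℝ)
    (S0 : ℕ → M → ProbabilityMeasure M) (μ : ProbabilityMeasure M) : Prop :=
  IsInvariant f μ ∧ ∀ ρ > (0 : ℝ), 0 < m (weakBasin dstar S0 ρ μ)

/-- A probability measure `μ` is empirically stochastically stable. -/
def EmpStochStable (m : Measure M)
    (dstar : ProbabilityMeasure M → ProbabilityMeasure M → ℝ)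
    (S : ℝ → ℕ → M → ProbabilityMeasure M) (μ : ProbabilityMeasure M) : Prop :=
  ∃ A : Set M, MeasurableSet A ∧ 0 < m A ∧
    ∀ ρ > (0 : ℝ), ∃ N : ℕ, ∀ n ≥ N, ∃ ε₀ > (0 : ℝ), ∀ ε : ℝ, 0 < ε → ε ≤ ε₀ →
      ∀ᵐ x ∂m, x ∈ A → dstar (S ε n x) μ < ρ

/-- `μ` is globally empirically stochastically stable: it is empirically stochastically
stable and its basin `Â_μ` has full `m`-measure. -/
def GloballyEmpStochStable (m : Measure M)
    (dstar : ProbabilityMeasure M → ProbabilityMeasure M → ℝ)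
    (S : ℝ → ℕ → M → ProbabilityMeasure M) (μ : ProbabilityMeasure M) : Prop :=
  EmpStochStable m dstar S μ ∧ m (empBasin dstar S μ)ᶜ = 0

/-- `dist*(σ, K) := inf_{μ ∈ K} dist*(σ, μ)` (a minimum when `K` is compact). -/
noncomputable def dstarSet (dstar : ProbabilityMeasure M → ProbabilityMeasure M → ℝ)
    (σ : ProbabilityMeasure M) (K : Set (ProbabilityMeasure M)) : ℝ :=
  sInf ((fun μ => dstar σ μ) '' K)

/-- The basin of empiric stochastic stability `Â_K` of a set of measures `K`. -/
noncomputable def empBasinSet (dstar : ProbabilityMeasure M → ProbabilityMeasure M → ℝ)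
    (S : ℝ → ℕ → M → ProbabilityMeasure M) (K : Set (ProbabilityMeasure M)) : Set M :=
  {x | ∀ ρ > (0 : ℝ), ∃ N : ℕ, ∀ n ≥ N, ∃ ε₀ > (0 : ℝ), ∀ ε : ℝ, 0 < ε → ε ≤ ε₀ →
    dstarSet dstar (S ε n x) K < ρ}

/-- The strong basin of statistical attraction `A_K = {x : pω_x ⊆ K}` of a set `K`. -/
def strongBasinSet (S0 : ℕ → M → ProbabilityMeasure M)
    (K : Set (ProbabilityMeasure M)) : Set M :=
  {x | pOmega S0 x ⊆ K}

/-- A nonempty weak*-compact set `K` of `f`-invariant measures is empirically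
stochastically stable: (a) uniform approximation on a positive-measure set, and
(b) minimality with respect to the basins. -/
noncomputable def EmpStochStableSet (f : M → M) (m : Measure M)
    (dstar : ProbabilityMeasure M → ProbabilityMeasure M → ℝ)
    (S : ℝ → ℕ → M → ProbabilityMeasure M) (K : Set (ProbabilityMeasure M)) : Prop :=
  K.Nonempty ∧ IsCompact K ∧ (∀ μ ∈ K, IsInvariant f μ) ∧
  (∃ A : Set M, MeasurableSet A ∧ 0 < m A ∧
    ∀ ρ > (0 : ℝ), ∃ N : ℕ, ∀ n ≥ N, ∃ ε₀ > (0 : ℝ), ∀ ε : ℝ, 0 < ε → ε ≤ ε₀ →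
      ∀ x ∈ A, dstarSet dstar (S ε n x) K < ρ) ∧
  (∀ K' : Set (ProbabilityMeasure M), K'.Nonempty → IsCompact K' →
    (∀ μ ∈ K', IsInvariant f μ) →
    m (empBasinSet dstar S K \ empBasinSet dstar S K') = 0 → K ⊆ K')

/-- `K` is globally empirically stochastically stable: it is empirically stochastically
stable and its basin `Â_K` has full `m`-measure. -/
noncomputable def GloballyEmpStochStableSet (f : M → M) (m : Measure M)
    (dstar : ProbabilityMeasure M → ProbabilityMeasure M → ℝ)
    (S : ℝ → ℕ → M → ProbabilityMeasure M) (K : Set (ProbabilityMeasure M)) : Prop :=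
  EmpStochStableSet f m dstar S K ∧ m (empBasinSet dstar S K)ᶜ = 0

section WeakStarMetric

variable {dstar : ProbabilityMeasure M → ProbabilityMeasure M → ℝ}

theorem MetrizesWeakStar.dstar_self (hd : MetrizesWeakStar dstar) (μ : ProbabilityMeasure M) :
    dstar μ μ = 0 :=
  (hd.1 μ μ).2 rfl

theorem MetrizesWeakStar.dstar_nonneg (hd : MetrizesWeakStar dstar)
    (μ ν : ProbabilityMeasure M) : 0 ≤ dstar μ ν := by
  have := hd.2.2.1 μ ν μ
  rw [hd.dstar_self, hd.2.1 ν μ] at this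
  linarith

theorem MetrizesWeakStar.setOf_dstar_lt_mem_nhds (hd : MetrizesWeakStar dstar)
    (μ : ProbabilityMeasure M) {ρ : ℝ} (hρ : 0 < ρ) : {ν | dstar ν μ < ρ} ∈ 𝓝 μ :=
  (hd.2.2.2 μ _).2 ⟨ρ, hρ, subset_rfl⟩

theorem MetrizesWeakStar.tendsto_nhds (hd : MetrizesWeakStar dstar) {ι : Type*} {l : Filter ι}
    {u : ι → ProbabilityMeasure M} {ν : ProbabilityMeasure M} :
    Tendsto u l (𝓝 ν) ↔ ∀ ρ > 0, ∀ᶠ i in l, dstar (u i) ν < ρ := by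
  refine ⟨fun hu ρ hρ => hu (hd.setOf_dstar_lt_mem_nhds ν hρ), fun hu s hs => ?_⟩
  obtain ⟨ρ, hρ, hsub⟩ := (hd.2.2.2 ν s).1 hs
  exact mem_of_superset (hu ρ hρ) fun i hi => hsub hi

theorem MetrizesWeakStar.continuous_dstar_left (hd : MetrizesWeakStar dstar)
    (μ : ProbabilityMeasure M) : Continuous (dstar · μ) := by
  refine continuous_iff_continuousAt.2 fun ν => Metric.tendsto_nhds.2 fun δ hδ => ?_
  filter_upwards [hd.setOf_dstar_lt_mem_nhds ν hδ] with ξ hξ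
  have h₁ := hd.2.2.1 ξ ν μ
  have h₂ := hd.2.2.1 ν ξ μ
  rw [hd.2.1 ν ξ] at h₂
  rw [Real.dist_eq, abs_sub_lt_iff]
  exact ⟨by linarith, by linarith⟩

theorem MetrizesWeakStar.isClosed_setOf_le_dstar (hd : MetrizesWeakStar dstar)
    (μ : ProbabilityMeasure M) (ρ : ℝ) : IsClosed {ν | ρ ≤ dstar ν μ} :=
  isClosed_le continuous_const (hd.continuous_dstar_left μ)

theorem MetrizesWeakStar.dstarSet_nonneg (hd : MetrizesWeakStar dstar) (σ : ProbabilityMeasure M)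
    (K : Set (ProbabilityMeasure M)) : 0 ≤ dstarSet dstar σ K :=
  Real.sInf_nonneg <| forall_mem_image.2 fun μ _ => hd.dstar_nonneg σ μ

theorem MetrizesWeakStar.dstarSet_le_dstar (hd : MetrizesWeakStar dstar)
    (σ : ProbabilityMeasure M) {K : Set (ProbabilityMeasure M)} {μ : ProbabilityMeasure M}
    (hμ : μ ∈ K) : dstarSet dstar σ K ≤ dstar σ μ :=
  csInf_le ⟨0, forall_mem_image.2 fun ν _ => hd.dstar_nonneg σ ν⟩ (mem_image_of_mem _ hμ)

theorem MetrizesWeakStar.dstarSet_le_dstar_add (hd : MetrizesWeakStar dstar)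
    (σ τ : ProbabilityMeasure M) (K : Set (ProbabilityMeasure M)) :
    dstarSet dstar σ K ≤ dstar σ τ + dstarSet dstar τ K := by
  rcases K.eq_empty_or_nonempty with rfl | hK
  · simp only [dstarSet, image_empty, Real.sInf_empty, add_zero]
    exact hd.dstar_nonneg σ τ
  rw [← sub_le_iff_le_add']
  refine le_csInf (hK.image _) (forall_mem_image.2 fun μ hμ => ?_)
  linarith [hd.dstarSet_le_dstar σ hμ, hd.2.2.1 σ τ μ]

theorem MetrizesWeakStar.exists_dstar_eq_dstarSet (hd : MetrizesWeakStar dstar)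
    {K : Set (ProbabilityMeasure M)} (hK : IsCompact K) (hne : K.Nonempty)
    (σ : ProbabilityMeasure M) : ∃ μ ∈ K, dstar σ μ = dstarSet dstar σ K := by
  have hcont : Continuous (dstar σ ·) := by
    simpa only [hd.2.1 σ] using hd.continuous_dstar_left σ
  obtain ⟨μ, hμ, hmin⟩ := hK.exists_isMinOn hne hcont.continuousOn
  exact ⟨μ, hμ,
    (IsLeast.csInf_eq ⟨mem_image_of_mem _ hμ, forall_mem_image.2 (isMinOn_iff.1 hmin)⟩).symm⟩

theorem MetrizesWeakStar.exists_mapClusterPt_of_tendsto_dstarSet (hd : MetrizesWeakStar dstar)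
    {K : Set (ProbabilityMeasure M)} (hK : IsCompact K) (hne : K.Nonempty) {ι : Type*}
    {l : Filter ι} [l.NeBot] {u : ι → ProbabilityMeasure M}
    (hu : Tendsto (fun i => dstarSet dstar (u i) K) l (𝓝 0)) :
    ∃ ν ∈ K, MapClusterPt ν l u := by
  choose v hvK hv using fun i => hd.exists_dstar_eq_dstarSet hK hne (u i)
  obtain ⟨ν, hνK, hν⟩ :=
    hK.exists_mapClusterPt (f := l) (tendsto_principal.2 (Eventually.of_forall hvK))
  refine ⟨ν, hνK, mapClusterPt_iff_frequently.2 fun s hs => ?_⟩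
  obtain ⟨ρ, hρ, hsub⟩ := (hd.2.2.2 ν s).1 hs
  have hv_near :=
    mapClusterPt_iff_frequently.1 hν _ (hd.setOf_dstar_lt_mem_nhds ν (half_pos hρ))
  refine (hv_near.and_eventually (hu.eventually (gt_mem_nhds (half_pos hρ)))).mono ?_
  rintro i ⟨hvi, hui⟩
  refine hsub (lt_of_le_of_lt (hd.2.2.1 (u i) (v i) ν) ?_)
  linarith [hv i, hvi.out]

theorem MetrizesWeakStar.tendsto_dstarSet_of_mapClusterPt_mem (hd : MetrizesWeakStar dstar)
    {K K' : Set (ProbabilityMeasure M)} (hK : IsCompact K) (hne : K.Nonempty) {ι : Type*}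
    {l : Filter ι} {u : ι → ProbabilityMeasure M}
    (hu : Tendsto (fun i => dstarSet dstar (u i) K) l (𝓝 0))
    (hK' : ∀ ν ∈ K, MapClusterPt ν l u → ν ∈ K') :
    Tendsto (fun i => dstarSet dstar (u i) K') l (𝓝 0) := by
  refine tendsto_order.2 ⟨fun a ha => Eventually.of_forall fun i =>
    ha.trans_le (hd.dstarSet_nonneg _ _), fun ρ hρ => ?_⟩
  by_contra hfar
  -- restrict `l` to the indices where `u` stays `ρ`-far from `K'` and cluster there
  set F := l ⊓ 𝓟 {i | ρ ≤ dstarSet dstar (u i) K'}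
  have : F.NeBot := frequently_iff_neBot.1 (by simpa only [not_eventually, not_lt] using hfar)
  obtain ⟨ν, hνK, hν⟩ :=
    hd.exists_mapClusterPt_of_tendsto_dstarSet hK hne (hu.mono_left (inf_le_left : F ≤ l))
  have hνK' := hK' ν hνK (hν.mono inf_le_left)
  have hfar' : ∀ᶠ i in F, ρ ≤ dstarSet dstar (u i) K' := mem_inf_of_right (mem_principal_self _)
  obtain ⟨i, hi_near, hi_far⟩ := (mapClusterPt_iff_frequently.1 hν _
    (hd.setOf_dstar_lt_mem_nhds ν hρ)).and_eventually hfar' |>.exists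
  linarith [hd.dstarSet_le_dstar (u i) hνK', hi_near.out]

end WeakStarMetric

theorem mem_pOmega_of_mapClusterPt [FirstCountableTopology (ProbabilityMeasure M)]
    {S0 : ℕ → M → ProbabilityMeasure M} {x : M} {ν : ProbabilityMeasure M}
    (h : MapClusterPt ν atTop (fun n => S0 n x)) : ν ∈ pOmega S0 x := by
  obtain ⟨ψ, hψ, hlim⟩ := h.tendsto_subseq
  exact ⟨fun i => ψ (i + 1), hψ.comp fun _ _ h => Nat.add_lt_add_right h 1,
    fun i => (Nat.le_add_left 1 i).trans (hψ.id_le _), hlim.comp (tendsto_add_atTop_nat 1)⟩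

theorem dist_integral_le_of_ae_dist_le {α E : Type*} [MeasurableSpace α] [NormedAddCommGroup E]
    [NormedSpace ℝ E] {ν : Measure α} [IsProbabilityMeasure ν] {g h : α → E}
    (hg : Integrable g ν) (hh : Integrable h ν) {δ : ℝ} (hgh : ∀ᵐ y ∂ν, dist (g y) (h y) ≤ δ) :
    dist (∫ y, g y ∂ν) (∫ y, h y ∂ν) ≤ δ := by
  rw [dist_eq_norm, ← integral_sub hg hh]
  simpa using norm_integral_le_of_norm_le_const (hgh.mono fun y hy => by rwa [← dist_eq_norm])

theorem continuousAt_indicator_ball_center {X E : Type*} [PseudoMetricSpace X] [Zero E]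
    [TopologicalSpace E] (g : X → E) {a z : X} {ε : ℝ} (h : dist a z ≠ ε) :
    ContinuousAt (fun w => (ball w ε).indicator g a) z := by
  have hdist : Tendsto (fun w => dist a w) (𝓝 z) (𝓝 (dist a z)) :=
    tendsto_const_nhds.dist tendsto_id
  rcases h.lt_or_gt with h | h
  · refine (continuousAt_const (y := g a)).congr ((hdist.eventually_lt_const h).mono ?_)
    exact fun w hw => (indicator_of_mem (mem_ball.2 hw) g).symm
  · refine (continuousAt_const (y := (0 : E))).congr ((hdist.eventually_const_lt h).mono ?_)
    exact fun w hw => (indicator_of_notMem (fun hmem => hw.not_gt (mem_ball.1 hmem)) g).symm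

/-- Dominated convergence: off the null sphere `sphere z ε`, the indicator of `ball w ε` is
locally constant in `w` near `z`. -/
theorem continuous_setIntegral_ball [CompactSpace M] {m : Measure M} [IsFiniteMeasure m]
    (hsph : ∀ (z : M) (r : ℝ), m (sphere z r) = 0) (φ : C(M, ℝ)) (ε : ℝ) :
    Continuous fun z => ∫ y in ball z ε, φ y ∂m := by
  refine continuous_iff_continuousAt.2 fun z => ?_
  simp_rw [← integral_indicator measurableSet_ball]
  refine continuousAt_of_dominated (bound := fun _ => ‖BoundedContinuousFunction.mkOfCompact φ‖)
    (Eventually.of_forall fun w => φ.continuous.aestronglyMeasurable.indicator measurableSet_ball)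
    (Eventually.of_forall fun w => Eventually.of_forall fun a =>
      (norm_indicator_le_norm_self _ _).trans
        ((BoundedContinuousFunction.mkOfCompact φ).norm_coe_le_norm a))
    (integrable_const _) ?_
  exact (measure_eq_zero_iff_ae_notMem.1 (hsph z ε)).mono fun a ha =>
    continuousAt_indicator_ball_center φ ha

section TransitionKernel

variable {f : M → M} {m : Measure M} {P : ℝ → M → ProbabilityMeasure M}

omit [BorelSpace M] in
theorem IsTransitionKernel.eq_smul_restrict (hP : IsTransitionKernel f m P) {ε : ℝ} (hε : 0 < ε)
    (x : M) : (P ε x : Measure M) = (m (ball (f x) ε))⁻¹ • m.restrict (ball (f x) ε) := by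
  ext A hA
  rw [hP ε hε x A hA, Measure.smul_apply, Measure.restrict_apply hA, smul_eq_mul,
    ENNReal.div_eq_inv_mul]

theorem IsTransitionKernel.continuous_integral [CompactSpace M] [IsFiniteMeasure m]
    (hP : IsTransitionKernel f m P) (hf : Continuous f)
    (hball : ∀ (z : M) (r : ℝ), 0 < r → 0 < m (ball z r))
    (hsph : ∀ (z : M) (r : ℝ), m (sphere z r) = 0) {ε : ℝ} (hε : 0 < ε) (φ : C(M, ℝ)) :
    Continuous fun x => ∫ y, φ y ∂(P ε x : Measure M) := by
  have hvol : Continuous fun x => m.real (ball (f x) ε) := by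
    simpa [Function.comp_def] using
      (continuous_setIntegral_ball hsph (ContinuousMap.const M 1) ε).comp hf
  simp_rw [hP.eq_smul_restrict hε, integral_smul_measure, ENNReal.toReal_inv, smul_eq_mul]
  refine (hvol.inv₀ fun x => ?_).mul ((continuous_setIntegral_ball hsph φ ε).comp hf)
  exact (ENNReal.toReal_pos (hball (f x) ε hε).ne' (measure_ne_top m _)).ne'

theorem IsTransitionKernel.tendstoUniformly_integral [CompactSpace M]
    (hP : IsTransitionKernel f m P) (φ : C(M, ℝ)) :
    TendstoUniformly (fun ε x => ∫ y, φ y ∂(P ε x : Measure M)) (φ ∘ f) (𝓝[>] 0) := by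
  refine Metric.tendstoUniformly_iff.2 fun δ hδ => ?_
  obtain ⟨η, hη, hφ⟩ := Metric.uniformContinuous_iff.1
    (CompactSpace.uniformContinuous_of_continuous φ.continuous) _ (half_pos hδ)
  filter_upwards [Ioo_mem_nhdsGT hη] with ε ⟨hε, hεη⟩ x
  have hconc : ∀ᵐ y ∂(P ε x : Measure M), y ∈ ball (f x) ε := by
    rw [hP.eq_smul_restrict hε x]
    exact Measure.ae_smul_measure (ae_restrict_mem measurableSet_ball) _
  have hclose := dist_integral_le_of_ae_dist_le (integrable_const (φ (f x)))
    ((BoundedContinuousFunction.mkOfCompact φ).integrable _)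
    (hconc.mono fun y hy => (hφ ((dist_comm _ _).trans_lt ((mem_ball.1 hy).trans hεη))).le)
  simp only [integral_const, probReal_univ, one_smul] at hclose
  exact hclose.trans_lt (half_lt_self hδ)

end TransitionKernel

section ZeroNoiseLimit

variable [CompactSpace M] {f : M → M} {m : Measure M} [IsFiniteMeasure m]
  {P : ℝ → M → ProbabilityMeasure M} {Lop : ℝ → ProbabilityMeasure M → ProbabilityMeasure M}

/-- Induction on `j`: `∫ φ d(L*_ε ν) = ∫ T_ε φ dν` with `T_ε φ x = ∫ φ dp_ε(x, ·)`, and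
`T_ε φ → φ ∘ f` uniformly as `ε → 0⁺`. -/
theorem tendsto_integral_iterate_dualTransfer (hf : Continuous f)
    (hball : ∀ (z : M) (r : ℝ), 0 < r → 0 < m (ball z r))
    (hsph : ∀ (z : M) (r : ℝ), m (sphere z r) = 0)
    (hP : IsTransitionKernel f m P) (hL : IsDualTransfer P Lop) (j : ℕ) (φ : C(M, ℝ)) (x : M) :
    Tendsto (fun ε => ∫ y, φ y ∂((Lop ε)^[j] (diracProb x) : Measure M)) (𝓝[>] 0)
      (𝓝 (φ (f^[j] x))) := by
  induction j generalizing φ with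
  | zero =>
    have hdirac : ∀ ε, ∫ y, φ y ∂((Lop ε)^[0] (diracProb x) : Measure M) = φ x :=
      fun _ => integral_dirac φ x
    rw [funext hdirac, Function.iterate_zero_apply]
    exact tendsto_const_nhds
  | succ j ih =>
    let ν : ℝ → ProbabilityMeasure M := fun ε => (Lop ε)^[j] (diracProb x)
    have hstep : (fun ε => ∫ z, (∫ y, φ y ∂(P ε z : Measure M)) ∂(ν ε : Measure M))
        =ᶠ[𝓝[>] 0] fun ε => ∫ y, φ y ∂((Lop ε)^[j + 1] (diracProb x) : Measure M) := by
      filter_upwards [self_mem_nhdsWithin (a := (0 : ℝ)) (s := Ioi 0)] with ε hε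
      rw [Function.iterate_succ_apply', hL ε hε]
    have hclose : Tendsto (fun ε => dist (∫ z, φ (f z) ∂(ν ε : Measure M))
        (∫ z, (∫ y, φ y ∂(P ε z : Measure M)) ∂(ν ε : Measure M))) (𝓝[>] 0) (𝓝 0) := by
      refine Metric.tendsto_nhds.2 fun δ hδ => ?_
      filter_upwards [self_mem_nhdsWithin, Metric.tendstoUniformly_iff.1
        (hP.tendstoUniformly_integral φ) (δ / 2) (half_pos hδ)] with ε hε hunif
      rw [Real.dist_0_eq_abs, abs_of_nonneg dist_nonneg]
      refine (dist_integral_le_of_ae_dist_le ?_ ?_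
        (Eventually.of_forall fun z => (hunif z).le)).trans_lt (half_lt_self hδ)
      · exact (BoundedContinuousFunction.mkOfCompact (φ.comp ⟨f, hf⟩)).integrable _
      · exact (BoundedContinuousFunction.mkOfCompact
          ⟨_, hP.continuous_integral hf hball hsph hε φ⟩).integrable _
    rw [Function.iterate_succ_apply']
    exact ((ih (φ.comp ⟨f, hf⟩)).congr_dist hclose).congr' hstep

theorem tendsto_empiricStochastic (hf : Continuous f)
    (hball : ∀ (z : M) (r : ℝ), 0 < r → 0 < m (ball z r))
    (hsph : ∀ (z : M) (r : ℝ), m (sphere z r) = 0)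
    (hP : IsTransitionKernel f m P) (hL : IsDualTransfer P Lop)
    {S : ℝ → ℕ → M → ProbabilityMeasure M} (hS : IsEmpiricStochastic Lop S)
    {S0 : ℕ → M → ProbabilityMeasure M} (hS0 : IsEmpiricZeroNoise f S0)
    {n : ℕ} (hn : 1 ≤ n) (x : M) :
    Tendsto (fun ε => S ε n x) (𝓝[>] 0) (𝓝 (S0 n x)) := by
  refine ProbabilityMeasure.tendsto_iff_forall_integral_tendsto.2 fun ψ => ?_
  have hlim : ∫ y, ψ y ∂(S0 n x : Measure M)
      = ((n : ℝ≥0∞)⁻¹).toReal • ∑ j ∈ Finset.range n, ψ (f^[j + 1] x) := by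
    rw [hS0 n hn x, integral_smul_measure,
      integral_finsetSum_measure fun j _ => ψ.integrable _]
    simp only [integral_dirac]
  have hnoisy : ∀ᶠ ε in 𝓝[>] 0, ∫ y, ψ y ∂(S ε n x : Measure M)
      = ((n : ℝ≥0∞)⁻¹).toReal •
          ∑ j ∈ Finset.range n, ∫ y, ψ y ∂((Lop ε)^[j + 1] (diracProb x) : Measure M) := by
    filter_upwards [self_mem_nhdsWithin] with ε hε
    rw [hS ε hε n hn x, integral_smul_measure,
      integral_finsetSum_measure fun j _ => ψ.integrable _]
  rw [hlim, tendsto_congr' hnoisy]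
  exact (tendsto_finsetSum _ fun j _ => tendsto_integral_iterate_dualTransfer hf hball hsph hP hL
    (j + 1) ψ.toContinuousMap x).const_smul _

end ZeroNoiseLimit

theorem mem_empBasinSet_iff_tendsto_dstarSet [CompactSpace M] {f : M → M} (hf : Continuous f)
    {m : Measure M} [IsFiniteMeasure m] (hball : ∀ (z : M) (r : ℝ), 0 < r → 0 < m (ball z r))
    (hsph : ∀ (z : M) (r : ℝ), m (sphere z r) = 0)
    {P : ℝ → M → ProbabilityMeasure M} (hP : IsTransitionKernel f m P)
    {Lop : ℝ → ProbabilityMeasure M → ProbabilityMeasure M} (hL : IsDualTransfer P Lop)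
    {S : ℝ → ℕ → M → ProbabilityMeasure M} (hS : IsEmpiricStochastic Lop S)
    {S0 : ℕ → M → ProbabilityMeasure M} (hS0 : IsEmpiricZeroNoise f S0)
    {dstar : ProbabilityMeasure M → ProbabilityMeasure M → ℝ} (hd : MetrizesWeakStar dstar)
    (K : Set (ProbabilityMeasure M)) (x : M) :
    x ∈ empBasinSet dstar S K ↔ Tendsto (fun n => dstarSet dstar (S0 n x) K) atTop (𝓝 0) := by
  -- `σ ↦ dist*(σ, K)` is 1-Lipschitz, so it inherits the zero-noise limit of `σ_{ε,n,x}`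
  have hlim : ∀ᶠ n in atTop, Tendsto (fun ε => dstarSet dstar (S ε n x) K) (𝓝[>] 0)
      (𝓝 (dstarSet dstar (S0 n x) K)) := by
    filter_upwards [eventually_ge_atTop 1] with n hn
    refine Metric.tendsto_nhds.2 fun δ hδ => ?_
    filter_upwards [hd.tendsto_nhds.1
      (tendsto_empiricStochastic hf hball hsph hP hL hS hS0 hn x) δ hδ] with ε hε
    have h₁ := hd.dstarSet_le_dstar_add (S ε n x) (S0 n x) K
    have h₂ := hd.dstarSet_le_dstar_add (S0 n x) (S ε n x) K
    rw [hd.2.1] at h₂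
    rw [Real.dist_eq, abs_sub_lt_iff]
    exact ⟨by linarith, by linarith⟩
  have hbasin : x ∈ empBasinSet dstar S K ↔
      ∀ ρ > 0, ∀ᶠ n in atTop, ∀ᶠ ε in 𝓝[>] 0, dstarSet dstar (S ε n x) K < ρ := by
    simp only [empBasinSet, mem_ofPred_eq, eventually_atTop,
      (nhdsGT_basis_Ioc (0 : ℝ)).eventually_iff, mem_Ioc, and_imp, gt_iff_lt]
  simp only [hbasin, Metric.tendsto_nhds, Real.dist_0_eq_abs,
    abs_of_nonneg (hd.dstarSet_nonneg _ _)]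
  refine ⟨fun h ρ hρ => ?_, fun h ρ hρ => ?_⟩
  · filter_upwards [h (ρ / 2) (half_pos hρ), hlim] with n hn hn'
    exact (le_of_tendsto hn' (hn.mono fun _ => le_of_lt)).trans_lt (half_lt_self hρ)
  · filter_upwards [h ρ hρ, hlim] with n hn hn'
    exact hn'.eventually_lt_const hn

theorem statement_14 {M : Type*} [MetricSpace M] [CompactSpace M] [MeasurableSpace M]
    [BorelSpace M] (f : M → M) (hf : Continuous f)
    (m : Measure M) [IsFiniteMeasure m]
    (hball : ∀ (z : M) (r : ℝ), 0 < r → 0 < m (Metric.ball z r))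
    (hsph : ∀ (z : M) (r : ℝ), m (Metric.sphere z r) = 0)
    (P : ℝ → M → ProbabilityMeasure M) (hP : IsTransitionKernel f m P)
    (Lop : ℝ → ProbabilityMeasure M → ProbabilityMeasure M) (hL : IsDualTransfer P Lop)
    (S : ℝ → ℕ → M → ProbabilityMeasure M) (hS : IsEmpiricStochastic Lop S)
    (S0 : ℕ → M → ProbabilityMeasure M) (hS0 : IsEmpiricZeroNoise f S0)
    (dstar : ProbabilityMeasure M → ProbabilityMeasure M → ℝ) (hd : MetrizesWeakStar dstar) :
    ∀ K : Set (ProbabilityMeasure M), EmpStochStableSet f m dstar S K →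
      ∀ μ ∈ K, PseudoPhysical f m dstar S0 μ := by
  rintro K ⟨hKne, hKc, hKinv, ⟨A, -, hApos, hA⟩, hmin⟩ μ₀ hμ₀
  have hbasin := mem_empBasinSet_iff_tendsto_dstarSet hf hball hsph hP hL hS hS0 hd
  refine ⟨hKinv μ₀ hμ₀, fun ρ₀ hρ₀ => pos_iff_ne_zero.2 fun hW => ?_⟩
  set W := weakBasin dstar S0 ρ₀ μ₀
  set K' := K ∩ {ν | ρ₀ ≤ dstar ν μ₀}
  have hfar : ∀ x ∉ W, ∀ ν ∈ K, MapClusterPt ν atTop (S0 · x) → ν ∈ K' :=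
    fun x hx ν hνK hν => ⟨hνK, not_lt.1 fun h => hx ⟨ν, mem_pOmega_of_mapClusterPt hν, h⟩⟩
  have hA_sub : A ⊆ empBasinSet dstar S K := fun x hx ρ hρ =>
    (hA ρ hρ).imp fun _ hN n hn => (hN n hn).imp fun _ ⟨hε₀, h⟩ =>
      ⟨hε₀, fun ε hε hεε₀ => h ε hε hεε₀ x hx⟩
  obtain ⟨x₀, hx₀A, hx₀W⟩ : (A \ W).Nonempty :=
    nonempty_of_measure_ne_zero ((measure_sdiff_null hW).symm ▸ hApos.ne')
  have hK'ne : K'.Nonempty := by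
    obtain ⟨ν, hνK, hν⟩ :=
      hd.exists_mapClusterPt_of_tendsto_dstarSet hKc hKne ((hbasin K x₀).1 (hA_sub hx₀A))
    exact ⟨ν, hfar x₀ hx₀W ν hνK hν⟩
  have hbasin_sub : empBasinSet dstar S K \ empBasinSet dstar S K' ⊆ W :=
    fun x ⟨hxK, hxK'⟩ => by_contra fun hxW => hxK' <| (hbasin K' x).2 <|
      hd.tendsto_dstarSet_of_mapClusterPt_mem hKc hKne ((hbasin K x).1 hxK) (hfar x hxW)
  have hKK' : K ⊆ K' := hmin K' hK'ne (hKc.inter_right (hd.isClosed_setOf_le_dstar μ₀ ρ₀))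
    (fun μ hμ => hKinv μ hμ.1) (measure_mono_null hbasin_sub hW)
  have hμ₀_far : ρ₀ ≤ dstar μ₀ μ₀ := (hKK' hμ₀).2
  rw [hd.dstar_self] at hμ₀_far
  exact hρ₀.not_ge hμ₀_far

end EmpStoch
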